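/- Let m ≥ 2 and let n be an integer with (3^{m−1} + 1)/2 ≤ n ≤ (3^{m−1} + 1)/2 + 3^{m−2}. Then there exists a feasible partition w_1 ≤ … ≤ w_m of n with R_{m−1} = w_1 + … + w_{m−1} = ⌊(2n + 3^{m−2} − 1)/4⌋; that is, the upper bound ⌊(2n + 3^{m−2} − 1)/4⌋ for R_{m−1} is attained. -/

import Mathlib

/-! The witness is `1, 3, …, 3 ^ (m - 3), a, b` with `a = R - (3 ^ (m - 2) - 1) / 2` and
`b = n - R`, where `R = ⌊(2n + 3 ^ (m - 2) - 1) / 4⌋` is the prescribed penultimate partial sum.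
Each weight exceeds twice the sum of the lighter ones by at most one, so choosing signs greedily
from the heaviest weight down represents every integer of absolute value at most `n`.
Minimality is a counting argument: `m'` weights have at most `3 ^ m'` signed sums, which must
cover the `2n + 1 > 3 ^ (m - 1)` integers in `[-n, n]`. -/

/-- `w 0, w 1, …, w (m-1)` (1-indexed as `w_1 ≤ … ≤ w_m` in the paper) is a
weighing sequence for `n`: a nondecreasing list of `m` positive integers summing
to `n` such that every integer `1 ≤ k ≤ n` can be written as
`k = u_1 w_1 + … + u_m w_m` with each `u_i ∈ {-1, 0, 1}`. -/
def IsWeighingSeq (n m : ℕ) (w : ℕ → ℕ) : Prop :=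
  (∀ i, i < m → 0 < w i) ∧
  (∀ i j, i ≤ j → j < m → w i ≤ w j) ∧
  (∑ i ∈ Finset.range m, w i) = n ∧
  ∀ k : ℤ, 1 ≤ k → k ≤ (n : ℤ) →
    ∃ u : ℕ → ℤ, (∀ i, u i = -1 ∨ u i = 0 ∨ u i = 1) ∧
      k = ∑ i ∈ Finset.range m, u i * (w i : ℤ)

def IsFeasible (n m : ℕ) (w : ℕ → ℕ) : Prop :=
  IsWeighingSeq n m w ∧ ∀ (m' : ℕ) (w' : ℕ → ℕ), IsWeighingSeq n m' w' → m ≤ m'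

open Finset

def IsSignedSum (w : ℕ → ℕ) (m : ℕ) (k : ℤ) : Prop :=
  ∃ u : ℕ → ℤ, (∀ i, u i = -1 ∨ u i = 0 ∨ u i = 1) ∧ k = ∑ i ∈ range m, u i * (w i : ℤ)

namespace IsSignedSum

variable {w : ℕ → ℕ} {m : ℕ} {k : ℤ}

theorem zero : IsSignedSum w m 0 :=
  ⟨0, fun _ => Or.inr (Or.inl rfl), by simp⟩

theorem neg (h : IsSignedSum w m k) : IsSignedSum w m (-k) := by
  obtain ⟨u, hu, rfl⟩ := h
  refine ⟨-u, fun i => ?_, by simp [sum_neg_distrib]⟩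
  rcases hu i with h | h | h <;> simp [h]

theorem succ (h : IsSignedSum w m k) {c : ℤ} (hc : c = -1 ∨ c = 0 ∨ c = 1) :
    IsSignedSum w (m + 1) (k + c * w m) := by
  obtain ⟨u, hu, rfl⟩ := h
  refine ⟨Function.update u m c, fun i => ?_, ?_⟩
  · rcases eq_or_ne i m with rfl | hi
    · simpa using hc
    · simpa [Function.update_of_ne hi] using hu i
  · rw [sum_range_succ, Function.update_self]
    congr 1
    refine sum_congr rfl fun i hi => ?_
    rw [Function.update_of_ne (mem_range.mp hi).ne]

end IsSignedSum

theorem isSignedSum_of_abs_le_sum {w : ℕ → ℕ} {m : ℕ}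
    (hgap : ∀ i < m, w i ≤ 2 * ∑ j ∈ range i, w j + 1) {k : ℤ}
    (hk : |k| ≤ ∑ i ∈ range m, (w i : ℤ)) : IsSignedSum w m k := by
  induction m generalizing k with
  | zero =>
    simp only [range_zero, sum_empty, abs_nonpos_iff] at hk
    exact hk ▸ IsSignedSum.zero
  | succ m ih =>
    set s := ∑ i ∈ range m, (w i : ℤ)
    have hwm : (w m : ℤ) ≤ 2 * s + 1 := by
      have := hgap m m.lt_succ_self
      simp only [s]
      exact_mod_cast this
    rw [sum_range_succ, abs_le] at hk
    obtain ⟨c, hc, hkc⟩ : ∃ c : ℤ, (c = -1 ∨ c = 0 ∨ c = 1) ∧ |k - c * w m| ≤ s := by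
      by_cases hpos : s < k
      · exact ⟨1, by simp, abs_le.mpr ⟨by linarith, by linarith⟩⟩
      by_cases hneg : k < -s
      · exact ⟨-1, by simp, abs_le.mpr ⟨by linarith, by linarith⟩⟩
      · exact ⟨0, by simp, abs_le.mpr ⟨by linarith, by linarith⟩⟩
    simpa using (ih (fun i hi => hgap i (by omega)) hkc).succ hc

theorem two_mul_add_one_le_three_pow_of_isSignedSum {w : ℕ → ℕ} {m n : ℕ}
    (h : ∀ k : ℤ, |k| ≤ n → IsSignedSum w m k) : 2 * n + 1 ≤ 3 ^ m := by
  classical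
  let signs : Finset (Fin m → ℤ) := Fintype.piFinset fun _ => {-1, 0, 1}
  have hcover : Icc (-(n : ℤ)) n ⊆ signs.image fun u => ∑ i : Fin m, u i * (w i : ℤ) := by
    intro k hk
    obtain ⟨u, hu, rfl⟩ := h k (abs_le.mpr (mem_Icc.mp hk))
    refine mem_image.mpr ⟨fun i => u i, Fintype.mem_piFinset.mpr fun i => ?_, ?_⟩
    · rcases hu i with h | h | h <;> simp [h]
    · exact (sum_range fun i => u i * (w i : ℤ)).symm
  have := (card_le_card hcover).trans card_image_le
  rw [Int.card_Icc, Fintype.card_piFinset_const] at this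
  simp only [show #({-1, 0, 1} : Finset ℤ) = 3 by rfl] at this
  omega

namespace IsWeighingSeq

variable {n m : ℕ} {w : ℕ → ℕ}

theorem isSignedSum_of_abs_le (h : IsWeighingSeq n m w) {k : ℤ} (hk : |k| ≤ n) :
    IsSignedSum w m k := by
  obtain ⟨-, -, -, hrep⟩ := h
  rcases lt_trichotomy k 0 with hk0 | rfl | hk0
  · simpa using IsSignedSum.neg (hrep (-k) (by omega) (by rw [abs_of_neg hk0] at hk; omega))
  · exact IsSignedSum.zero
  · exact hrep k hk0 (by rw [abs_of_pos hk0] at hk; exact hk)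

theorem two_mul_add_one_le_three_pow (h : IsWeighingSeq n m w) : 2 * n + 1 ≤ 3 ^ m :=
  two_mul_add_one_le_three_pow_of_isSignedSum fun _ => h.isSignedSum_of_abs_le

theorem isFeasible (h : IsWeighingSeq n m w) (hn : 3 ^ (m - 1) < 2 * n + 1) :
    IsFeasible n m w := by
  refine ⟨h, fun m' w' h' => ?_⟩
  have : m - 1 < m' :=
    (Nat.pow_lt_pow_iff_right (by norm_num)).mp (hn.trans_le h'.two_mul_add_one_le_three_pow)
  omega

end IsWeighingSeq

def threePowsThen (k a b : ℕ) (i : ℕ) : ℕ :=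
  if i < k then 3 ^ i else if i = k then a else b

section threePowsThen

variable {k a b : ℕ}

theorem threePowsThen_monotone (hka : 3 ^ (k - 1) ≤ a) (hab : a ≤ b) :
    Monotone (threePowsThen k a b) := by
  refine monotone_nat_of_le_succ fun i => ?_
  unfold threePowsThen
  rcases lt_trichotomy (i + 1) k with hi | hi | hi
  · simp only [hi, (Nat.lt_succ_self i).trans hi, if_true]
    exact Nat.pow_le_pow_right (by norm_num) i.le_succ
  · simp only [hi, show i < k by omega, if_true, lt_irrefl, if_false]
    rwa [show i = k - 1 by omega]
  · rcases eq_or_lt_of_le (Nat.lt_succ_iff.mp hi) with rfl | hi'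
    · simp [hab]
    · simp [show ¬ i < k by omega, show i ≠ k by omega, show ¬ i + 1 < k by omega,
        show i + 1 ≠ k by omega]

theorem two_mul_sum_threePowsThen_add_one {i : ℕ} (hi : i ≤ k) :
    2 * ∑ j ∈ range i, threePowsThen k a b j + 1 = 3 ^ i := by
  induction i with
  | zero => simp
  | succ i ih =>
    rw [sum_range_succ, threePowsThen, if_pos (show i < k by omega), pow_succ, ← ih (by omega)]
    ring

theorem sum_range_succ_threePowsThen :
    2 * ∑ j ∈ range (k + 1), threePowsThen k a b j + 1 = 3 ^ k + 2 * a := by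
  rw [sum_range_succ, mul_add, add_right_comm, two_mul_sum_threePowsThen_add_one le_rfl,
    threePowsThen, if_neg (lt_irrefl k), if_pos rfl]

theorem sum_range_succ_succ_threePowsThen :
    2 * ∑ j ∈ range (k + 2), threePowsThen k a b j + 1 = 3 ^ k + 2 * a + 2 * b := by
  rw [sum_range_succ, mul_add, add_right_comm, sum_range_succ_threePowsThen,
    threePowsThen, if_neg (by omega), if_neg (by omega)]

theorem isWeighingSeq_threePowsThen (hka : 3 ^ (k - 1) ≤ a) (hab : a ≤ b) (ha : a ≤ 3 ^ k)
    (hb : b ≤ 3 ^ k + 2 * a) {n : ℕ} (hn : 2 * n + 1 = 3 ^ k + 2 * a + 2 * b) :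
    IsWeighingSeq n (k + 2) (threePowsThen k a b) := by
  have hmono := threePowsThen_monotone hka hab
  have hsum : ∑ i ∈ range (k + 2), threePowsThen k a b i = n := by
    have := sum_range_succ_succ_threePowsThen (k := k) (a := a) (b := b)
    omega
  have hgap : ∀ i < k + 2,
      threePowsThen k a b i ≤ 2 * ∑ j ∈ range i, threePowsThen k a b j + 1 := by
    intro i hi
    rcases lt_trichotomy i k with hik | rfl | hik
    · rw [two_mul_sum_threePowsThen_add_one hik.le, threePowsThen, if_pos hik]
    · rw [two_mul_sum_threePowsThen_add_one le_rfl, threePowsThen, if_neg (lt_irrefl i),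
        if_pos rfl]
      exact ha
    · obtain rfl : i = k + 1 := by omega
      rw [sum_range_succ_threePowsThen, threePowsThen, if_neg (by omega), if_neg (by omega)]
      exact hb
  refine ⟨fun i _ => ?_, fun i j hij _ => hmono hij, hsum, fun k hk1 hk2 => ?_⟩
  · have ha0 : 0 < a := (by positivity : 0 < 3 ^ (k - 1)).trans_le hka
    unfold threePowsThen
    split_ifs <;> first | positivity | omega
  · exact isSignedSum_of_abs_le_sum hgap (by rw [abs_of_pos hk1]; exact_mod_cast hsum ▸ hk2)

end threePowsThen

/-- For `m ≥ 2` and `(3^(m-1) + 1)/2 ≤ n ≤ (3^(m-1) + 1)/2 + 3^(m-2)`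
(stated doubled), there is a feasible partition of `n` (with `m` parts)
attaining the upper bound `R_(m-1) = ⌊(2n + 3^(m-2) - 1) / 4⌋`. -/
theorem exists_feasible_with_max_penultimate_sum (m n : ℕ) (hm : 2 ≤ m)
    (h1 : 3 ^ (m - 1) + 1 ≤ 2 * n) (h2 : 2 * n ≤ 3 ^ (m - 1) + 1 + 2 * 3 ^ (m - 2)) :
    ∃ w : ℕ → ℕ, IsFeasible n m w ∧
      ((∑ j ∈ Finset.range (m - 1), w j : ℕ) : ℤ) =
        ⌊(2 * (n : ℚ) + 3 ^ (m - 2) - 1) / 4⌋ := by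
  obtain ⟨k, rfl⟩ : ∃ k, m = k + 2 := ⟨m - 2, by omega⟩
  rw [show k + 2 - 1 = k + 1 by omega, Nat.add_sub_cancel, pow_succ] at *
  have hodd : 3 ^ k % 2 = 1 := Nat.odd_iff.mp (Odd.pow (by decide))
  have hpred : 3 ^ (k - 1) * 3 ≤ 3 ^ k + 2 := by
    rcases k with _ | k
    · norm_num
    · simp [pow_succ]
  set R := (2 * n + 3 ^ k - 1) / 4 with hR
  have hw : IsWeighingSeq n (k + 2) (threePowsThen k (R - 3 ^ k / 2) (n - R)) :=
    isWeighingSeq_threePowsThen (by omega) (by omega) (by omega) (by omega) (by omega)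
  refine ⟨_, hw.isFeasible (by rw [show k + 2 - 1 = k + 1 by omega, pow_succ]; omega), ?_⟩
  have hsum := sum_range_succ_threePowsThen (k := k) (a := R - 3 ^ k / 2) (b := n - R)
  have hfloor : ⌊(2 * (n : ℚ) + 3 ^ k - 1) / 4⌋ = R := by
    rw [hR, Int.natCast_div, ← Rat.floor_natCast_div_natCast,
      Nat.cast_sub (show 1 ≤ 2 * n + 3 ^ k by omega)]
    push_cast
    rfl
  rw [hfloor]
  norm_cast
  omega
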